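/- arXiv:1202.1016 — 4 statements merged into one kernel-verified Lean document; each statement's English description precedes it below -/
import Mathlib

section
/- Let c ≥ 1 and p > 0 be real numbers with c·p ≤ 1/e, and let v be a natural number. Then for every natural number r, the success probability of passing r+1 encoding stages of the concatenated fault-tolerant scheme satisfies ∏_{k=0}^{r} (1 − (1/c)·(c·p)^{2^k})^v ≥ exp(−3·p·v). In particular the fidelity of the encoded state is bounded below by a constant (independent of the concatenation level r) of the form e^{−O(p·v)}. -/
/-! The success probability is self-similar: stage `0` contributes `(1 - p)^v`, and the remaining
stages form the same product with `c * p` replaced by `(c * p)^2`, that is with `p` replaced by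
`c * p^2`. Inducting on the number of stages, it suffices that one stage pays for the difference
of the two bounds, `exp (-3 * (p - c * p^2)) ≤ 1 - p`, which is the elementary inequality
`exp (-(a * x)) ≤ 1 / (1 + a * x) ≤ 1 - x` with `a = 3 * (1 - c * p)`. -/

open Finset Real

theorem Real.exp_neg_mul_le_one_sub {a x : ℝ} (ha : 0 ≤ a) (hx : 0 ≤ x) (hax : a * x ≤ a - 1) :
    exp (-(a * x)) ≤ 1 - x := by
  have hpos : 0 < 1 + a * x := by positivity
  calc exp (-(a * x)) = (exp (a * x))⁻¹ := exp_neg _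
    _ ≤ (1 + a * x)⁻¹ := inv_anti₀ hpos (by linarith [add_one_le_exp (a * x)])
    _ ≤ 1 - x := by rw [inv_le_iff_one_le_mul₀ hpos]; nlinarith

theorem Real.one_div_exp_one_le_two_fifths : 1 / exp 1 ≤ 2 / 5 := by
  rw [div_le_iff₀ (exp_pos 1)]
  linarith [exp_one_gt_d9]

theorem Finset.prod_range_succ_pow_two_pow {R M : Type*} [Monoid R] [CommMonoid M] (f : R → M)
    (x : R) (n : ℕ) :
    ∏ k ∈ range (n + 1), f (x ^ 2 ^ k) = f x * ∏ k ∈ range n, f ((x ^ 2) ^ 2 ^ k) := by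
  simp only [prod_range_succ', pow_zero, pow_one, pow_succ, pow_mul, mul_comm]

theorem exp_le_prod_one_sub_pow_two_pow {c q : ℝ} (hc : 1 ≤ c) (hq : 0 ≤ q) (hq' : q ≤ 2 / 5)
    (v n : ℕ) : exp (-3 * (q / c) * v) ≤ ∏ k ∈ range n, (1 - 1 / c * q ^ 2 ^ k) ^ v := by
  induction n generalizing q with
  | zero =>
    rw [prod_range_zero, exp_le_one_iff]
    have : 0 ≤ q / c := by positivity
    nlinarith
  | succ n ih =>
    have hqc : q / c ≤ q := div_le_self hq hc
    have hstage : exp (-(3 * (1 - q) * (q / c))) ≤ 1 - 1 / c * q := by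
      rw [one_div_mul_eq_div]
      exact exp_neg_mul_le_one_sub (by linarith) (by positivity) (by nlinarith)
    have hrest := ih (q := q ^ 2) (by positivity) (by nlinarith)
    rw [prod_range_succ_pow_two_pow (fun y => (1 - 1 / c * y) ^ v)]
    calc exp (-3 * (q / c) * v)
        = exp (-(3 * (1 - q) * (q / c))) ^ v * exp (-3 * (q ^ 2 / c) * v) := by
          rw [← exp_nat_mul, ← exp_add]; ring_nf
      _ ≤ (1 - 1 / c * q) ^ v * ∏ k ∈ range n, (1 - 1 / c * (q ^ 2) ^ 2 ^ k) ^ v :=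
          mul_le_mul (pow_le_pow_left₀ (exp_pos _).le hstage v) hrest (exp_pos _).le
            (pow_nonneg ((exp_pos _).le.trans hstage) v)

/-- **Fidelity of concatenated fault-tolerant encoding.**
If `c ≥ 1`, `p > 0` and `c·p ≤ 1/e`, then for every concatenation level `r`,
the probability of successfully passing the `r+1` encoding stages,
`∏_{k=0}^{r} (1 − (1/c)·(c·p)^{2^k})^v`, is bounded below by `exp(−3·p·v)`,
a constant independent of `r`. -/
theorem concatenated_encoding_fidelity (c p : ℝ) (v : ℕ)
    (hc : 1 ≤ c) (hp : 0 < p) (hcp : c * p ≤ 1 / Real.exp 1) (r : ℕ) :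
    ∏ k ∈ Finset.range (r + 1), (1 - (1 / c) * (c * p) ^ (2 ^ k)) ^ v ≥
      Real.exp (-3 * p * v) := by
  have h := exp_le_prod_one_sub_pow_two_pow hc (by positivity)
    (hcp.trans one_div_exp_one_le_two_fifths) v (r + 1)
  rwa [mul_div_cancel_left₀ p (by positivity)] at h
end

section
/- Let α > 0 be a real number. The function f(z) = ln(1 − α·z)/(z·ln z) is monotonically increasing on the interval (0, β] whenever 0 < β < 1 and α·β < 1; that is, for all 0 < z₁ ≤ z₂ ≤ β one has ln(1 − α·z₁)/(z₁·ln z₁) ≤ ln(1 − α·z₂)/(z₂·ln z₂). -/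
/-!
Write `f z = (log (1 - α z) / z) / log z`. Bernoulli's inequality (equivalently, concavity of
`z ↦ log (1 - α z)`, which vanishes at `0`) makes the numerator nonpositive and decreasing in `z`,
while the denominator is negative and increasing; the quotient of two such functions increases.
-/

open Real

lemma log_one_sub_mul_div_le_of_le {a x y : ℝ} (hx : 0 < x) (hxy : x ≤ y)
    (hax : a * x < 1) (hay : a * y < 1) :
    log (1 - a * y) / y ≤ log (1 - a * x) / x := by
  have hy : 0 < y := hx.trans_le hxy
  have hbernoulli : 1 - a * y ≤ (1 - a * x) ^ (y / x) := by
    have h := one_add_mul_self_le_rpow_one_add (s := -(a * x)) (by linarith)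
      ((one_le_div hx).mpr hxy)
    calc 1 - a * y = 1 + y / x * -(a * x) := by field_simp; ring
      _ ≤ (1 + -(a * x)) ^ (y / x) := h
      _ = (1 - a * x) ^ (y / x) := by rw [← sub_eq_add_neg]
  have hlog : log (1 - a * y) ≤ y / x * log (1 - a * x) := by
    rw [← log_rpow (by linarith)]
    exact log_le_log (by linarith) hbernoulli
  rw [div_le_div_iff₀ hy hx]
  calc log (1 - a * y) * x ≤ y / x * log (1 - a * x) * x := by gcongr
    _ = log (1 - a * x) * y := by field_simp

lemma div_le_div_of_nonpos_of_le_of_neg {a b c d : ℝ} (hba : b ≤ a) (hb : b ≤ 0)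
    (hcd : c ≤ d) (hd : d < 0) : a / c ≤ b / d := by
  have hc : c < 0 := hcd.trans_lt hd
  calc a / c ≤ b / c := div_le_div_of_nonpos_of_le hc.le hba
    _ = -b / -c := (neg_div_neg_eq b c).symm
    _ ≤ -b / -d :=
      div_le_div_of_nonneg_left (neg_nonneg.mpr hb) (neg_pos.mpr hd) (neg_le_neg hcd)
    _ = b / d := neg_div_neg_eq b d

theorem integrand_monotone_general (α β : ℝ) (hα : 0 < α) (hβ1 : β < 1)
    (hαβ : α * β < 1) (z₁ z₂ : ℝ) (hz₁ : 0 < z₁) (h12 : z₁ ≤ z₂) (h2β : z₂ ≤ β) :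
    Real.log (1 - α * z₁) / (z₁ * Real.log z₁) ≤
      Real.log (1 - α * z₂) / (z₂ * Real.log z₂) := by
  have hz₂ : 0 < z₂ := hz₁.trans_le h12
  have hαz₂ : α * z₂ < 1 := (mul_le_mul_of_nonneg_left h2β hα.le).trans_lt hαβ
  have hαz₁ : α * z₁ < 1 := (mul_le_mul_of_nonneg_left h12 hα.le).trans_lt hαz₂
  have hnum₂ : log (1 - α * z₂) / z₂ ≤ 0 :=
    div_nonpos_of_nonpos_of_nonneg (log_nonpos (by linarith) (by nlinarith)) hz₂.le
  rw [← div_div, ← div_div]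
  exact div_le_div_of_nonpos_of_le_of_neg (log_one_sub_mul_div_le_of_le hz₁ h12 hαz₁ hαz₂)
    hnum₂ (log_le_log hz₁ h12) (log_neg hz₂ (by linarith))

/-- **Monotonicity of the integrand.**
For `α > 0`, the function `f(z) = ln(1 − α·z)/(z·ln z)` is monotonically
increasing on `(0, β]` whenever `0 < β < 1` and `α·β < 1`: for all
`0 < z₁ ≤ z₂ ≤ β` one has `f(z₁) ≤ f(z₂)`. -/
theorem integrand_monotone (α β : ℝ) (hα : 0 < α) (hβ0 : 0 < β) (hβ1 : β < 1)
    (hαβ : α * β < 1) (z₁ z₂ : ℝ) (hz₁ : 0 < z₁) (h12 : z₁ ≤ z₂) (h2β : z₂ ≤ β) :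
    Real.log (1 - α * z₁) / (z₁ * Real.log z₁) ≤
      Real.log (1 - α * z₂) / (z₂ * Real.log z₂) :=
  integrand_monotone_general α β hα hβ1 hαβ z₁ z₂ hz₁ h12 h2β
end

section
/- Let α > 0 and 0 < β < 1 be real numbers with α·β < 1. Then ∫_{0}^{β} ln(1 − α·z)/(z·ln z) dz ≤ ln(1 − α·β)/ln β. -/
/-! On `(0, β]` the integrand is `(log (1 - α z) / z) / log z`. The chord slope
`log (1 - α z) / z` of the concave function `z ↦ log (1 - α z)` from the origin is nonpositive and
decreasing, while `log z` is negative and increasing, so the integrand is nonnegative and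
increasing, and the integral is at most `β` times its value at `β`. -/

open MeasureTheory Real

theorem MeasureTheory.setIntegral_le_mul_measureReal_of_nonneg_of_le {X : Type*}
    [MeasurableSpace X] {μ : Measure X} {s : Set X} {f : X → ℝ} {C : ℝ} (hs : μ s < ⊤)
    (hf₀ : ∀ x ∈ s, 0 ≤ f x) (hfC : ∀ x ∈ s, f x ≤ C) :
    ∫ x in s, f x ∂μ ≤ C * μ.real s :=
  (le_abs_self _).trans <| norm_setIntegral_le_of_norm_le_const hs fun x hx => by
    rw [Real.norm_eq_abs, abs_of_nonneg (hf₀ x hx)]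
    exact hfC x hx

namespace Real

theorem mul_log_one_sub_mul_le {α β z : ℝ} (hz : 0 ≤ z) (hzβ : z ≤ β) (hαβ : α * β < 1) :
    z * log (1 - α * β) ≤ β * log (1 - α * z) := by
  obtain rfl | hz₀ := hz.eq_or_lt
  · simp
  have hβ : 0 < β := hz₀.trans_le hzβ
  have hconc := strictConcaveOn_log_Ioi.concaveOn.2 (Set.mem_Ioi.2 one_pos)
    (Set.mem_Ioi.2 (sub_pos.2 hαβ)) (sub_nonneg.2 ((div_le_one hβ).2 hzβ))
    (div_nonneg hz hβ.le) (sub_add_cancel 1 (z / β))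
  have hcomb : (1 - z / β) • (1 : ℝ) + (z / β) • (1 - α * β) = 1 - α * z := by
    simp only [smul_eq_mul]
    field_simp
    ring
  rw [hcomb, log_one, smul_zero, zero_add, smul_eq_mul, div_mul_eq_mul_div,
    div_le_iff₀ hβ] at hconc
  linarith

theorem log_one_sub_mul_div_mul_log_nonneg {α z : ℝ} (hα : 0 ≤ α) (hz₀ : 0 < z) (hz₁ : z < 1)
    (hαz : α * z < 1) : 0 ≤ log (1 - α * z) / (z * log z) :=
  div_nonneg_of_nonpos
    (log_nonpos (by linarith) (by nlinarith))
    (mul_nonpos_of_nonneg_of_nonpos hz₀.le (log_neg hz₀ hz₁).le)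

theorem log_one_sub_mul_div_mul_log_le {α β z : ℝ} (hα : 0 ≤ α) (hz₀ : 0 < z) (hzβ : z ≤ β)
    (hβ₁ : β < 1) (hαβ : α * β < 1) :
    log (1 - α * z) / (z * log z) ≤ log (1 - α * β) / (β * log β) := by
  have hβ₀ : 0 < β := hz₀.trans_le hzβ
  have hlogβ : log β < 0 := log_neg hβ₀ hβ₁
  have hlogz : log z ≤ log β := log_le_log hz₀ hzβ
  have hslope : log (1 - α * β) / β ≤ log (1 - α * z) / z := by
    rw [div_le_div_iff₀ hβ₀ hz₀]
    linarith [mul_log_one_sub_mul_le hz₀.le hzβ hαβ]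
  have hslope_nonpos : log (1 - α * z) / z ≤ 0 :=
    div_nonpos_of_nonpos_of_nonneg (log_nonpos (by nlinarith) (by nlinarith)) hz₀.le
  rw [mul_comm z, mul_comm β, div_mul_eq_div_div_swap, div_mul_eq_div_div_swap]
  calc log (1 - α * z) / z / log z ≤ log (1 - α * z) / z / log β := by
        rw [div_eq_mul_inv _ (log z), div_eq_mul_inv _ (log β)]
        exact mul_le_mul_of_nonpos_left
          ((inv_le_inv_of_neg hlogβ (hlogz.trans_lt hlogβ)).2 hlogz) hslope_nonpos
    _ ≤ log (1 - α * β) / β / log β := div_le_div_of_nonpos_of_le hlogβ.le hslope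

end Real

/-- **Bounding the integral by its value at the endpoint.**
For `α > 0`, `0 < β < 1` with `α·β < 1`,
`∫_0^β ln(1 − α·z)/(z·ln z) dz ≤ ln(1 − α·β)/ln β`,
which is the estimate of the integral of the monotonically increasing
nonnegative integrand `f` by `β·f(β)`. -/
theorem integral_le_endpoint_bound (α β : ℝ)
    (hα : 0 < α) (hβ0 : 0 < β) (hβ1 : β < 1) (hαβ : α * β < 1) :
    ∫ z in Set.Ioc (0 : ℝ) β, Real.log (1 - α * z) / (z * Real.log z) ≤
      Real.log (1 - α * β) / Real.log β := by
  have hvol : volume (Set.Ioc 0 β) < ⊤ := measure_Ioc_lt_top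
  calc ∫ z in Set.Ioc (0 : ℝ) β, log (1 - α * z) / (z * log z)
      ≤ log (1 - α * β) / (β * log β) * volume.real (Set.Ioc 0 β) :=
        setIntegral_le_mul_measureReal_of_nonneg_of_le hvol
          (fun z ⟨hz₀, hzβ⟩ => log_one_sub_mul_div_mul_log_nonneg hα.le hz₀
            (hzβ.trans_lt hβ1) (by nlinarith))
          (fun z ⟨hz₀, hzβ⟩ => log_one_sub_mul_div_mul_log_le hα.le hz₀ hzβ hβ1 hαβ)
    _ = log (1 - α * β) / log β := by
        rw [Real.volume_real_Ioc_of_le hβ0.le, sub_zero]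
        field_simp
end

section
/- (Encoding as teleportation) Let ψ = a·e₀ + b·e₁ be a qubit state (a, b ∈ ℂ) and Φ⁺ = (e_{00} + e_{11})/√2 the Bell state. On the three-qubit space, consider the protocol: measure X₁X₂ with outcome ε ∈ {+1, −1}; if ε = −1 apply Z₂Z₃; then measure Z₁Z₂ with outcome δ ∈ {+1, −1}; if δ = −1 apply X₂X₃. Then for every pair of outcomes (ε, δ), the resulting (unnormalized) state equals (1/2) · Φ⁺₁₂ ⊗ ψ₃; i.e., qubit 3 carries the initial state of qubit 1 while qubits 1 and 2 are left in the Bell state, and each outcome pair occurs with probability 1/4 when ψ is a unit vector. -/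
noncomputable section

/-- Flip the bits of a string `s : ι → Bool` at the positions in `A`. -/
def flipSet {ι : Type*} [DecidableEq ι] (A : Finset ι) (s : ι → Bool) : ι → Bool :=
  fun i => if i ∈ A then !(s i) else s i

/-- The Pauli-type operator `X_A = ⊗_{i ∈ A} σ_x` on the multi-qubit Hilbert space
`EuclideanSpace ℂ (ι → Bool)`: it permutes the standard basis vectors by flipping
the bits in `A`, i.e. `X_A e_s = e_{s ⊕ χ_A}`. -/
def XOp {ι : Type*} [Fintype ι] [DecidableEq ι] (A : Finset ι) :
    EuclideanSpace ℂ (ι → Bool) →ₗ[ℂ] EuclideanSpace ℂ (ι → Bool) where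
  toFun f := WithLp.toLp 2 (fun s => f (flipSet A s))
  map_add' _ _ := rfl
  map_smul' _ _ := rfl

/-- The Pauli-type operator `Z_B = ⊗_{i ∈ B} σ_z` on the multi-qubit Hilbert space:
it acts diagonally by `Z_B e_s = (−1)^{|{i ∈ B : s i = true}|} e_s`. -/
def ZOp {ι : Type*} [Fintype ι] [DecidableEq ι] (B : Finset ι) :
    EuclideanSpace ℂ (ι → Bool) →ₗ[ℂ] EuclideanSpace ℂ (ι → Bool) where
  toFun f := WithLp.toLp 2 (fun s => (-1 : ℂ) ^ (B.filter (fun i => s i = true)).card * f s)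
  map_add' f g := by
    ext s
    simp [mul_add]
  map_smul' c f := by
    ext s
    simp [Pi.smul_apply, smul_eq_mul]
    ring

/-- The standard (computational) basis vector `e_s` of the multi-qubit space. -/
def basisVec {ι : Type*} [Fintype ι] [DecidableEq ι] (s : ι → Bool) :
    EuclideanSpace ℂ (ι → Bool) :=
  EuclideanSpace.single s 1

open scoped Classical

/-- The three-qubit Hilbert space, basis indexed by bit strings of length 3. -/
abbrev ThreeQubit := EuclideanSpace ℂ (Fin 3 → Bool)

/-- Projection `(1 + ε·O)/2` onto the `ε`-eigenspace of an observable `O`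
(for `ε = ±1`), i.e. measuring `O` with outcome `ε`. -/
def measProj (ε : ℂ) (O : ThreeQubit →ₗ[ℂ] ThreeQubit) : ThreeQubit →ₗ[ℂ] ThreeQubit :=
  (2 : ℂ)⁻¹ • (LinearMap.id + ε • O)

/-- The initial state `ψ ⊗ Φ⁺` with `ψ = a·e₀ + b·e₁` on qubit 1 and the Bell
state `Φ⁺ = (e₀₀ + e₁₁)/√2` on qubits 2 and 3. -/
def teleportInit (a b : ℂ) : ThreeQubit :=
  (Real.sqrt 2 : ℂ)⁻¹ •
    (a • basisVec ![false, false, false] + a • basisVec ![false, true, true] +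
      b • basisVec ![true, false, false] + b • basisVec ![true, true, true])

/-- The (unnormalized) state resulting from the teleportation protocol with
measurement outcomes `ε` (of `X₁X₂`) and `δ` (of `Z₁Z₂`): measure `X₁X₂`, apply
`Z₂Z₃` if `ε = −1`, measure `Z₁Z₂`, apply `X₂X₃` if `δ = −1`. -/
def teleportResult (a b ε δ : ℂ) : ThreeQubit :=
  (if δ = -1 then XOp ({1, 2} : Finset (Fin 3)) else LinearMap.id)
    (measProj δ (ZOp ({0, 1} : Finset (Fin 3)))
      ((if ε = -1 then ZOp ({1, 2} : Finset (Fin 3)) else LinearMap.id)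
        (measProj ε (XOp ({0, 1} : Finset (Fin 3))) (teleportInit a b))))

/-!
Stabilizer argument (qubit `k` of the paper is the index `k - 1 : Fin 3`). `Z₂Z₃` fixes
`ψ ⊗ Φ⁺` and anticommutes with `X₁X₂`, so `Z₂Z₃ P₋(X₁X₂)(ψ ⊗ Φ⁺) = P₊(X₁X₂)(ψ ⊗ Φ⁺)`: after the
correction both outcomes `ε` give the same state. Likewise `X₂X₃` fixes `ψ ⊗ Φ⁺`, commutes with
`X₁X₂` and anticommutes with `Z₁Z₂`, so after the second correction every branch ends in
`P₊(Z₁Z₂) P₊(X₁X₂)(ψ ⊗ Φ⁺)`, which a direct computation identifies with `½ Φ⁺ ⊗ ψ`.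
-/

open Finset

section PauliOperators

lemma pow_card_filter_eq_prod_ite {ι M : Type*} [CommMonoid M] (B : Finset ι) (p : ι → Prop)
    [DecidablePred p] (x : M) : x ^ #{i ∈ B | p i} = ∏ i ∈ B, if p i then x else 1 := by
  rw [prod_ite, prod_const_one, mul_one, prod_const]

variable {ι : Type*} [DecidableEq ι]

lemma flipSet_involutive (A : Finset ι) : Function.Involutive (flipSet A) := by
  intro s
  funext i
  by_cases hi : i ∈ A <;> simp [flipSet, hi]

lemma flipSet_comm (A B : Finset ι) (s : ι → Bool) :
    flipSet A (flipSet B s) = flipSet B (flipSet A s) := by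
  funext i
  by_cases hA : i ∈ A <;> by_cases hB : i ∈ B <;> simp [flipSet, hA, hB]

lemma neg_one_pow_card_filter_flipSet (A B : Finset ι) (s : ι → Bool) :
    (-1 : ℂ) ^ #{i ∈ B | flipSet A s i = true} =
      (-1) ^ #(A ∩ B) * (-1) ^ #{i ∈ B | s i = true} := by
  simp only [inter_comm A, ← filter_mem_eq_inter, pow_card_filter_eq_prod_ite, ← prod_mul_distrib]
  refine prod_congr rfl fun i _ => ?_
  by_cases hA : i ∈ A <;> cases hs : s i <;> simp [flipSet, hA, hs]

variable [Fintype ι]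

lemma XOp_apply (A : Finset ι) (f : EuclideanSpace ℂ (ι → Bool)) (s : ι → Bool) :
    XOp A f s = f (flipSet A s) := rfl

lemma ZOp_apply (B : Finset ι) (f : EuclideanSpace ℂ (ι → Bool)) (s : ι → Bool) :
    ZOp B f s = (-1 : ℂ) ^ #{i ∈ B | s i = true} * f s := rfl

lemma XOp_XOp_comm (A B : Finset ι) (f : EuclideanSpace ℂ (ι → Bool)) :
    XOp A (XOp B f) = XOp B (XOp A f) := by
  ext s
  simp only [XOp_apply, flipSet_comm]

lemma XOp_ZOp (A B : Finset ι) (f : EuclideanSpace ℂ (ι → Bool)) :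
    XOp A (ZOp B f) = (-1 : ℂ) ^ #(A ∩ B) • ZOp B (XOp A f) := by
  ext s
  simp only [XOp_apply, ZOp_apply, PiLp.smul_apply, smul_eq_mul,
    neg_one_pow_card_filter_flipSet, mul_assoc]

lemma ZOp_XOp (A B : Finset ι) (f : EuclideanSpace ℂ (ι → Bool)) :
    ZOp B (XOp A f) = (-1 : ℂ) ^ #(A ∩ B) • XOp A (ZOp B f) := by
  rw [XOp_ZOp, smul_smul, ← mul_pow]
  norm_num

lemma XOp_basisVec (A : Finset ι) (t : ι → Bool) :
    XOp A (basisVec t) = basisVec (flipSet A t) := by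
  ext s
  simp only [XOp_apply, basisVec, PiLp.single_apply, (flipSet_involutive A).eq_iff]

lemma ZOp_basisVec (B : Finset ι) (t : ι → Bool) :
    ZOp B (basisVec t) = (-1 : ℂ) ^ #{i ∈ B | t i = true} • basisVec t := by
  ext s
  by_cases h : s = t
  · subst h; simp [ZOp_apply, basisVec]
  · simp [ZOp_apply, basisVec, h]

end PauliOperators

lemma apply_measProj_of_commute_smul {O O' : ThreeQubit →ₗ[ℂ] ThreeQubit} {c : ℂ}
    (h : ∀ v, O' (O v) = c • O (O' v)) (ε : ℂ) (v : ThreeQubit) :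
    O' (measProj ε O v) = measProj (c * ε) O (O' v) := by
  simp only [measProj, LinearMap.smul_apply, LinearMap.add_apply, LinearMap.id_apply, map_smul,
    map_add, h, smul_smul, mul_comm c]

lemma flipSet_vec3 (A : Finset (Fin 3)) (x y z : Bool) :
    flipSet A ![x, y, z] =
      ![if 0 ∈ A then !x else x, if 1 ∈ A then !y else y, if 2 ∈ A then !z else z] := by
  funext i
  fin_cases i <;> rfl

lemma XOp_teleportInit (a b : ℂ) : XOp {1, 2} (teleportInit a b) = teleportInit a b := by
  simp only [teleportInit, map_smul, map_add, XOp_basisVec, flipSet_vec3, mem_insert, mem_singleton,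
    Fin.reduceEq, or_self, or_true, or_false, ↓reduceIte, Bool.not_false, Bool.not_true]
  module

lemma ZOp_teleportInit (a b : ℂ) : ZOp {1, 2} (teleportInit a b) = teleportInit a b := by
  simp [teleportInit, ZOp_basisVec, filter_insert, filter_singleton]

/-- The state `Φ⁺₁₂ ⊗ ψ₃`. -/
def teleportFinal (a b : ℂ) : ThreeQubit :=
  (Real.sqrt 2 : ℂ)⁻¹ •
    (a • basisVec ![false, false, false] + b • basisVec ![false, false, true] +
      a • basisVec ![true, true, false] + b • basisVec ![true, true, true])

lemma teleport_correct_X_outcome (a b ε : ℂ) (hε : ε = 1 ∨ ε = -1) :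
    (if ε = -1 then ZOp ({1, 2} : Finset (Fin 3)) else LinearMap.id)
        (measProj ε (XOp {0, 1}) (teleportInit a b)) =
      measProj 1 (XOp {0, 1}) (teleportInit a b) := by
  rcases hε with rfl | rfl
  · rw [if_neg (by norm_num), LinearMap.id_apply]
  · have hanti : ∀ v : ThreeQubit,
        ZOp {1, 2} (XOp {0, 1} v) = (-1 : ℂ) • XOp {0, 1} (ZOp {1, 2} v) := by
      intro v
      rw [ZOp_XOp, show #({0, 1} ∩ {1, 2} : Finset (Fin 3)) = 1 by decide, pow_one]
    rw [if_pos rfl, apply_measProj_of_commute_smul hanti, ZOp_teleportInit]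
    norm_num

lemma teleport_correct_Z_outcome (a b δ : ℂ) (hδ : δ = 1 ∨ δ = -1) :
    (if δ = -1 then XOp ({1, 2} : Finset (Fin 3)) else LinearMap.id)
        (measProj δ (ZOp {0, 1}) (measProj 1 (XOp {0, 1}) (teleportInit a b))) =
      measProj 1 (ZOp {0, 1}) (measProj 1 (XOp {0, 1}) (teleportInit a b)) := by
  rcases hδ with rfl | rfl
  · rw [if_neg (by norm_num), LinearMap.id_apply]
  · have hanti : ∀ v : ThreeQubit,
        XOp {1, 2} (ZOp {0, 1} v) = (-1 : ℂ) • ZOp {0, 1} (XOp {1, 2} v) := by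
      intro v
      rw [XOp_ZOp, show #({1, 2} ∩ {0, 1} : Finset (Fin 3)) = 1 by decide, pow_one]
    have hcomm : ∀ v : ThreeQubit,
        XOp {1, 2} (XOp {0, 1} v) = (1 : ℂ) • XOp {0, 1} (XOp {1, 2} v) := by
      intro v
      rw [XOp_XOp_comm, one_smul]
    rw [if_pos rfl, apply_measProj_of_commute_smul hanti, apply_measProj_of_commute_smul hcomm,
      XOp_teleportInit]
    norm_num

lemma measProj_Z_measProj_X_teleportInit (a b : ℂ) :
    measProj 1 (ZOp {0, 1}) (measProj 1 (XOp {0, 1}) (teleportInit a b)) =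
      (2 : ℂ)⁻¹ • teleportFinal a b := by
  simp only [measProj, teleportInit, teleportFinal, LinearMap.add_apply, LinearMap.smul_apply,
    LinearMap.id_apply, one_smul, map_smul, map_add, XOp_basisVec, ZOp_basisVec, flipSet_vec3,
    mem_insert, mem_singleton, Fin.reduceEq, or_self, or_true, or_false, ↓reduceIte, Bool.not_false,
    Bool.not_true, filter_insert, filter_singleton, Matrix.cons_val_zero, Matrix.cons_val_one]
  norm_num
  module

open scoped InnerProductSpace in
lemma norm_sq_teleportFinal (a b : ℂ) : ‖teleportFinal a b‖ ^ 2 = ‖a‖ ^ 2 + ‖b‖ ^ 2 := by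
  have hinner : ⟪teleportFinal a b, teleportFinal a b⟫_ℂ = ((‖a‖ ^ 2 + ‖b‖ ^ 2 : ℝ) : ℂ) := by
    simp only [teleportFinal, basisVec, inner_add_left, inner_add_right, inner_smul_left,
      inner_smul_right, EuclideanSpace.inner_single_left, PiLp.single_apply, Matrix.vecCons_inj,
      Complex.conj_ofReal, map_inv₀, map_one, one_mul]
    norm_num
    have hsqrt : ((Real.sqrt 2 : ℝ) : ℂ) ^ 2 = 2 := by
      rw [← Complex.ofReal_pow, Real.sq_sqrt zero_le_two, Complex.ofReal_ofNat]
    rw [← Complex.mul_conj', ← Complex.mul_conj']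
    field_simp
    linear_combination -(a * (starRingEnd ℂ) a + b * (starRingEnd ℂ) b) * hsqrt
  rw [← inner_self_eq_norm_sq (𝕜 := ℂ), hinner]
  exact Complex.ofReal_re _

/-- **Encoding as teleportation.** For every pair of measurement outcomes
`(ε, δ) ∈ {±1}²`, the teleportation protocol leaves the three qubits in the
(unnormalized) state `(1/2) · Φ⁺₁₂ ⊗ ψ₃`: qubit 3 carries the initial state
`ψ = a·e₀ + b·e₁` of qubit 1, qubits 1 and 2 are in the Bell state `Φ⁺`, and
each outcome pair occurs with probability `(1/2)² = 1/4` when `ψ` is a unit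
vector. -/
theorem teleportation_protocol (a b ε δ : ℂ)
    (hε : ε = 1 ∨ ε = -1) (hδ : δ = 1 ∨ δ = -1) :
    teleportResult a b ε δ =
      (2 : ℂ)⁻¹ • ((Real.sqrt 2 : ℂ)⁻¹ •
        (a • basisVec ![false, false, false] + b • basisVec ![false, false, true] +
          a • basisVec ![true, true, false] + b • basisVec ![true, true, true])) ∧
    (‖a‖ ^ 2 + ‖b‖ ^ 2 = 1 → ‖teleportResult a b ε δ‖ = 1 / 2) := by
  have hresult : teleportResult a b ε δ = (2 : ℂ)⁻¹ • teleportFinal a b := by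
    rw [teleportResult, teleport_correct_X_outcome a b ε hε, teleport_correct_Z_outcome a b δ hδ,
      measProj_Z_measProj_X_teleportInit]
  refine ⟨hresult, fun hab => ?_⟩
  have hfinal : ‖teleportFinal a b‖ = 1 := by
    rw [← pow_eq_one_iff_of_nonneg (norm_nonneg _) two_ne_zero, norm_sq_teleportFinal, hab]
  rw [hresult, norm_smul, hfinal]
  norm_num

end
end
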